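/- (Graded-piece computation from the proof of the trace estimate in §3.) Let n ≥ 1 and s ≥ 1 be integers with m := min(v_p(s), n) ≤ n−1, and set s₀ := s/p^m. Then the map O → fil^log_s Wₙ(L) / fil_s Wₙ(L) sending x to the class of V^{n−m−1}([x·z^{−s₀}]) is a surjective homomorphism of additive groups whose kernel is exactly 𝔪; in particular it induces an isomorphism of abelian groups κ ≅ fil^log_s Wₙ(L) / fil_s Wₙ(L). -/

import Mathlib

noncomputable section

open scoped Classical

/-- A discretely valued field: a field `L` together with a normalized additive valuation
`v : L → ℤ ∪ {∞}` and a uniformizer `z` (so `v z = 1`).  The valuation ring is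
`O = {a : L | 0 ≤ v a}`, with maximal ideal `𝔪 = {a : L | 1 ≤ v a}`. -/
structure DVField (L : Type) [Field L] : Type where
  v : L → WithTop ℤ
  z : L
  v_top : ∀ a : L, v a = ⊤ ↔ a = 0
  v_mul : ∀ a b : L, v (a * b) = v a + v b
  v_add : ∀ a b : L, min (v a) (v b) ≤ v (a + b)
  v_z : v z = 1

namespace DVField

variable {L : Type} [Field L]

/-- `Wₙ(O) ⊆ Wₙ(L)`: the truncated Witt vectors all of whose components are integral. -/
def WO (D : DVField L) (p n : ℕ) : Set (TruncatedWittVector p n L) :=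
  {x | ∀ i : Fin n, 0 ≤ D.v (x.coeff i)}

/-- The Brylinski–Kato filtration
`fil^log_r Wₙ(L) = {(a₀, …, a_{n-1}) | p^{n-1-i} · v(aᵢ) ≥ -r for all i}`. -/
def filLog (D : DVField L) (p r n : ℕ) : Set (TruncatedWittVector p n L) :=
  {x | ∀ i : Fin n, (↑(-(r : ℤ)) : WithTop ℤ) ≤ p ^ (n - 1 - (i : ℕ)) • D.v (x.coeff i)}

end DVField

/-- The Verschiebung `V : Wₙ(L) → W_{n+1}(L)`, shifting components. -/
def wV {p : ℕ} {L : Type} [Field L] {n : ℕ} (x : TruncatedWittVector p n L) :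
    TruncatedWittVector p (n + 1) L :=
  TruncatedWittVector.mk p fun i =>
    if h : (i : ℕ) = 0 then 0 else x.coeff ⟨(i : ℕ) - 1, by have := i.isLt; omega⟩

/-- The iterated Verschiebung `V^{n-m} : W_m(L) → Wₙ(L)` (for `m ≤ n`), given by shifting
components by `n - m`. -/
def wVit {p : ℕ} {L : Type} [Field L] {m n : ℕ} (x : TruncatedWittVector p m L) :
    TruncatedWittVector p n L :=
  TruncatedWittVector.mk p fun i =>
    if h : n - m ≤ (i : ℕ) ∧ (i : ℕ) - (n - m) < m then x.coeff ⟨(i : ℕ) - (n - m), h.2⟩ else 0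

/-- The restriction `R : W_{n+1}(L) → Wₙ(L)`, dropping the last component. -/
def wR {p : ℕ} {L : Type} [Field L] {n : ℕ} (x : TruncatedWittVector p (n + 1) L) :
    TruncatedWittVector p n L :=
  TruncatedWittVector.mk p fun i => x.coeff i.castSucc

/-- The iterated restriction `R^{m-n} : W_m(L) → Wₙ(L)` (for `n ≤ m`), keeping the first `n`
components. -/
def wRes {p : ℕ} {L : Type} [Field L] {m n : ℕ} (x : TruncatedWittVector p m L) :
    TruncatedWittVector p n L :=
  TruncatedWittVector.mk p fun i => if h : (i : ℕ) < m then x.coeff ⟨(i : ℕ), h⟩ else 0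

/-- The Frobenius `F : W_{n+1}(L) → Wₙ(L)` in characteristic `p`:
componentwise `p`-th power followed by restriction. -/
def wF {p : ℕ} {L : Type} [Field L] {n : ℕ} (x : TruncatedWittVector p (n + 1) L) :
    TruncatedWittVector p n L :=
  TruncatedWittVector.mk p fun i => x.coeff i.castSucc ^ p

/-- The Teichmüller lift `[a] = (a, 0, …, 0)`. -/
def wT (p : ℕ) {L : Type} [Field L] (n : ℕ) (a : L) : TruncatedWittVector p n L :=
  TruncatedWittVector.mk p fun i => if (i : ℕ) = 0 then a else 0

/-- The map `p̲ : Wₙ(L) → W_{n+1}(L)`: lift to length `n+1` (by appending a zero component)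
and multiply by `p`. -/
def wP {p : ℕ} [Fact p.Prime] {L : Type} [Field L] {n : ℕ} (x : TruncatedWittVector p n L) :
    TruncatedWittVector p (n + 1) L :=
  p • (wRes x : TruncatedWittVector p (n + 1) L)

namespace DVField

variable {L : Type} [Field L]

/-- The Kato–Matsuda filtration
`fil_r Wₙ(L) = fil^log_{r-1} Wₙ(L) + V^{n-m}(fil^log_r W_m(L))` where `m = min(v_p(r), n)`,
and `fil_0 Wₙ(L) = Wₙ(O)`. -/
def filKM (D : DVField L) (p : ℕ) [Fact p.Prime] (r n : ℕ) :
    Set (TruncatedWittVector p n L) :=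
  if r = 0 then D.WO p n
  else {x | ∃ a ∈ D.filLog p (r - 1) n,
    ∃ b ∈ D.filLog p r (min (padicValNat p r) n), x = a + wVit b}

/-- The `p`-saturation `Fil^p_r Wₙ(L) = Σ_{s=0}^{n-1} p^s · fil_{r·p^s} Wₙ(L)`. -/
def FilP (D : DVField L) (p : ℕ) [Fact p.Prime] (r n : ℕ) :
    Set (TruncatedWittVector p n L) :=
  {x | ∃ f : Fin n → TruncatedWittVector p n L,
      (∀ s : Fin n, f s ∈ D.filKM p (r * p ^ (s : ℕ)) n) ∧
      x = ∑ s : Fin n, p ^ (s : ℕ) • f s}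

end DVField

/-- The map `O → Wₙ(L)`, `x ↦ V^{n-m-1}([x · z^{-s₀}])`, where `m = min(v_p(s), n)` and
`s₀ = s/p^m`. -/
def DVField.twMap {L : Type} [Field L] (D : DVField L) (p n s : ℕ) (x : L) :
    TruncatedWittVector p n L :=
  wVit (wT p (min (padicValNat p s) n + 1)
    (x * (D.z ^ (s / p ^ min (padicValNat p s) n))⁻¹))


/-!
Put `m = v_p(s) < n`, `k = n - 1 - m` and `s₀ = s / p ^ m`. The vector `V^k[x z^{-s₀}]` has a
single nonzero entry `x z^{-s₀}`, in position `k`, where `fil^log` weighs valuations by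
`p ^ m`. So it lies in `fil^log_s`, and it lies in `fil_s` iff `p ^ m (v x - s₀) ≥ 1 - s`, i.e.
`v x ≥ 1`: the `V^{n-m}`-part of `fil_s` has no entries in positions `≤ k` and cannot help.

Additivity modulo `fil_s`: with `u = z^{-s₀}`, the vector
`[xu + yu] - [xu] - [yu] = [u]([x + y] - [x] - [y])` has vanishing `0`-th entry and `i`-th entry
`u ^ p ^ i` times an integral element, so its image under `V^k` is `V^{n-m}` of an element of
`fil^log_s W_m`.

Surjectivity: for `w ∈ fil^log_s` take `x = w_k z^{s₀}`. An entry `w_i` with `i < k` has weight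
`p ^ (n-1-i)`, which does not divide `s`, so `p ^ (n-1-i) v(w_i) ≥ -s` improves to `≥ 1 - s`;
the entries beyond `k` form `V^{n-m}` of an element of `fil^log_s W_m`.
-/

theorem WithTop.coe_le_nsmul_iff {N : ℕ} (hN : N ≠ 0) {j : ℤ} {t : WithTop ℤ} :
    (j : WithTop ℤ) ≤ N • t ↔ ∀ c : ℤ, t = c → j ≤ N * c := by
  induction t using WithTop.recTopCoe with
  | top =>
    obtain ⟨k, rfl⟩ := Nat.exists_eq_succ_of_ne_zero hN
    simp [succ_nsmul]
  | coe c =>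
    simp only [← WithTop.coe_nsmul, WithTop.coe_le_coe, WithTop.coe_inj, forall_eq', nsmul_eq_mul]

theorem Int.one_sub_le_of_neg_le_of_not_dvd {N s : ℕ} {c : ℤ} (h : -(s : ℤ) ≤ N * c)
    (hN : ¬ N ∣ s) : 1 - (s : ℤ) ≤ N * c := by
  have hne : -(s : ℤ) ≠ N * c := fun heq => hN (Int.natCast_dvd_natCast.1 ⟨-c, by linarith⟩)
  linarith [Int.add_one_le_of_lt (h.lt_of_ne hne)]

theorem pow_padicValNat_mul_div (p s : ℕ) :
    (p : ℤ) ^ padicValNat p s * (s / p ^ padicValNat p s : ℕ) = s := by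
  exact_mod_cast Nat.mul_div_cancel' pow_padicValNat_dvd

namespace WittVector

variable {p : ℕ} [Fact p.Prime]

private theorem teichmuller_mul_eq_mk_of_rat {σ : Type*} (r : MvPolynomial σ ℚ)
    (x : WittVector p (MvPolynomial σ ℚ)) :
    teichmuller p r * x = mk p fun i => r ^ p ^ i * x.coeff i := by
  apply (ghostMap.bijective_of_invertible p _).injective
  funext n
  rw [map_mul, Pi.mul_apply, ghostMap_apply, ghostMap_apply, ghostMap_apply,
    ghostComponent_teichmuller, ghostComponent_apply, ghostComponent_apply,
    aeval_wittPolynomial, aeval_wittPolynomial, Finset.mul_sum]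
  refine Finset.sum_congr rfl fun i hi => ?_
  rw [Finset.mem_range] at hi
  rw [coeff_mk, mul_pow, ← pow_mul, ← pow_add, Nat.add_sub_cancel' (Nat.le_of_lt_succ hi)]
  ring

private theorem teichmuller_mul_eq_mk_of_int {σ : Type*} (r : MvPolynomial σ ℤ)
    (x : WittVector p (MvPolynomial σ ℤ)) :
    teichmuller p r * x = mk p fun i => r ^ p ^ i * x.coeff i := by
  apply map_injective (MvPolynomial.map (Int.castRingHom ℚ))
    (MvPolynomial.map_injective _ Int.cast_injective)
  rw [map_mul, map_teichmuller, teichmuller_mul_eq_mk_of_rat]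
  ext i
  simp [map_coeff]

theorem teichmuller_mul_coeff {R : Type*} [CommRing R] (r : R) (x : WittVector p R) (i : ℕ) :
    (teichmuller p r * x).coeff i = r ^ p ^ i * x.coeff i := by
  let φ : MvPolynomial (Option ℕ) ℤ →+* R :=
    (MvPolynomial.aeval fun o : Option ℕ => o.elim r x.coeff).toRingHom
  have hx : map φ (mk p fun j => MvPolynomial.X (some j)) = x := by
    ext j
    simp [φ, map_coeff]
  have h := congrArg (map φ) <| teichmuller_mul_eq_mk_of_int (p := p) (MvPolynomial.X none)
    (mk p fun j => MvPolynomial.X (some j))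
  rw [map_mul, map_teichmuller, hx] at h
  simpa [φ, map_coeff] using congrArg (coeff · i) h

variable {R : Type*} [CommRing R]

theorem iterate_verschiebung_coeff_eq_ite (x : WittVector p R) (k i : ℕ) :
    (verschiebung^[k] x).coeff i = if k ≤ i then x.coeff (i - k) else 0 := by
  split_ifs with h
  · obtain ⟨j, rfl⟩ := Nat.exists_eq_add_of_le' h
    rw [iterate_verschiebung_coeff, Nat.add_sub_cancel]
  · exact iterate_verschiebung_coeff_eq_zero x (not_le.1 h)

theorem iterate_verschiebung_teichmuller_coeff (k : ℕ) (a : R) (i : ℕ) :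
    (verschiebung^[k] (teichmuller p a)).coeff i = if i = k then a else 0 := by
  rw [iterate_verschiebung_coeff_eq_ite]
  rcases lt_trichotomy i k with h | rfl | h
  · simp [h.ne, not_le.2 h]
  · simp [teichmuller_coeff_zero]
  · simp [h.le, h.ne', teichmuller_coeff_pos p a (i - k) (Nat.sub_pos_of_lt h)]

theorem iterate_verschiebung_shift_one (k : ℕ) {x : WittVector p R} (hx : x.coeff 0 = 0) :
    verschiebung^[k] x = verschiebung^[k + 1] (x.shift 1) := by
  rw [Function.iterate_add_apply, ← eq_iterate_verschiebung (by simpa using hx)]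

theorem eq_mk_add_teichmuller_add_shift (x : WittVector p R) (k : ℕ) :
    x = mk p (fun i => if i < k then x.coeff i else 0) +
      verschiebung^[k] (teichmuller p (x.coeff k)) +
      verschiebung^[k + 1] (x.shift (k + 1)) := by
  have head_add_mid : ∀ i, (mk p (fun i => if i < k then x.coeff i else 0) +
      verschiebung^[k] (teichmuller p (x.coeff k))).coeff i =
      if i ≤ k then x.coeff i else 0 := by
    intro i
    rw [coeff_add_of_disjoint]
    · simp only [coeff_mk, iterate_verschiebung_teichmuller_coeff]
      rcases lt_trichotomy i k with h | rfl | h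
      · simp [h, h.le, h.ne]
      · simp
      · simp [not_lt.2 h.le, not_le.2 h, h.ne']
    · intro j
      rw [coeff_mk, iterate_verschiebung_teichmuller_coeff]
      by_cases h : j < k
      · simp [h.ne]
      · simp [h]
  ext i
  rw [coeff_add_of_disjoint, head_add_mid, iterate_verschiebung_coeff_eq_ite, shift_coeff]
  · by_cases h : i ≤ k
    · simp [h, show ¬ k + 1 ≤ i by omega]
    · rw [if_neg h, if_pos (by omega), Nat.add_sub_cancel' (by omega), zero_add]
  · intro j
    rw [head_add_mid, iterate_verschiebung_coeff_eq_ite]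
    by_cases h : j ≤ k
    · simp [h, show ¬ k + 1 ≤ j by omega]
    · simp [h]

end WittVector

open WittVector

namespace DVField

variable {L : Type} [Field L] (D : DVField L)

theorem v_zero : D.v 0 = ⊤ := (D.v_top 0).2 rfl

theorem v_one : D.v 1 = 0 := by
  obtain ⟨c, hc⟩ := WithTop.ne_top_iff_exists.1 (mt (D.v_top 1).1 one_ne_zero)
  have h := D.v_mul 1 1
  rw [mul_one, ← hc, ← WithTop.coe_add, WithTop.coe_inj] at h
  rw [← hc, show c = 0 by omega, WithTop.coe_zero]

def toAddValuation : AddValuation L (WithTop ℤ) :=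
  AddValuation.of D.v D.v_zero D.v_one D.v_add D.v_mul

theorem toAddValuation_apply (a : L) : D.toAddValuation a = D.v a := AddValuation.of_apply _

def integers : Subring L where
  carrier := {a | 0 ≤ D.v a}
  zero_mem' := by simp [D.v_zero]
  one_mem' := by simp [D.v_one]
  add_mem' {a b} ha hb := (le_min ha hb).trans (D.v_add a b)
  mul_mem' {a b} ha hb := by simpa [D.v_mul] using add_nonneg ha hb
  neg_mem' {a} ha := by
    show 0 ≤ D.v (-a)
    rwa [← toAddValuation_apply, AddValuation.map_neg, toAddValuation_apply]

theorem v_z_pow (e : ℕ) : D.v (D.z ^ e) = (e : ℤ) := by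
  rw [← toAddValuation_apply, AddValuation.map_pow, toAddValuation_apply, D.v_z]
  simp

variable {D}

theorem z_ne_zero : D.z ≠ 0 := fun h => by simpa [h, D.v_zero] using D.v_z

theorem v_mul_z_pow (a : L) (e : ℕ) : D.v (a * D.z ^ e) = D.v a + (e : ℤ) := by
  rw [D.v_mul, D.v_z_pow]

theorem v_mul_inv_z_pow_eq_iff {x : L} {e : ℕ} {c : ℤ} :
    D.v (x * (D.z ^ e)⁻¹) = c ↔ D.v x = (c + e : ℤ) := by
  conv_rhs => rw [← inv_mul_cancel_right₀ (pow_ne_zero e z_ne_zero) x, v_mul_z_pow]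
  rw [WithTop.coe_add, WithTop.add_right_inj (WithTop.coe_ne_top)]

variable {p : ℕ}

theorem mem_filLog_iff (hp : p ≠ 0) {r n : ℕ} {x : TruncatedWittVector p n L} :
    x ∈ D.filLog p r n ↔
      ∀ i (c : ℤ), D.v (x.coeff i) = c → -(r : ℤ) ≤ p ^ (n - 1 - (i : ℕ)) * c := by
  simp only [filLog, Set.mem_ofPred_eq, WithTop.coe_le_nsmul_iff (pow_ne_zero _ hp)]
  push_cast
  rfl

theorem mem_filLog_of_coeff_eq_zero_or_eq (hp : p ≠ 0) {r n : ℕ}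
    {x a : TruncatedWittVector p n L} (ha : a ∈ D.filLog p r n)
    (h : ∀ i, x.coeff i = 0 ∨ x.coeff i = a.coeff i) :
    x ∈ D.filLog p r n := by
  rw [mem_filLog_iff hp] at ha ⊢
  intro i c hc
  rcases h i with h0 | heq
  · simp [h0, D.v_zero] at hc
  · exact ha i c (heq ▸ hc)

variable [hp : Fact p.Prime]

theorem wT_eq_truncate (m : ℕ) (a : L) : wT p m a = truncate m (teichmuller p a) := by
  ext i
  simpa [wT] using (iterate_verschiebung_teichmuller_coeff 0 a i).symm

theorem wVit_truncate {m n : ℕ} (h : m ≤ n) (y : WittVector p L) :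
    (wVit (truncate m y) : TruncatedWittVector p n L) = truncate n (verschiebung^[n - m] y) := by
  ext i
  simp only [wVit, TruncatedWittVector.coeff_mk, coeff_truncate, iterate_verschiebung_coeff_eq_ite]
  by_cases hi : n - m ≤ (i : ℕ)
  · rw [dif_pos ⟨hi, by omega⟩, if_pos hi]
  · rw [dif_neg (fun h => hi h.1), if_neg hi]

theorem coeff_add_truncate_iterate_verschiebung {n j : ℕ} (a : TruncatedWittVector p n L)
    (y : WittVector p L) {i : Fin n} (hi : (i : ℕ) < j) :
    (a + truncate n (verschiebung^[j] y)).coeff i = a.coeff i := by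
  have hin : (i : ℕ) + 1 ≤ n := i.isLt
  have hV : truncate ((i : ℕ) + 1) (verschiebung^[j] y) = 0 :=
    (mem_ker_truncate _ _).2 fun l hl => iterate_verschiebung_coeff_eq_zero y (by omega)
  have hcoeff (x : TruncatedWittVector p n L) :
      x.coeff i = (TruncatedWittVector.truncate hin x).coeff (Fin.last i) := by
    rw [TruncatedWittVector.coeff_truncate]
    rfl
  rw [hcoeff, hcoeff a, map_add, TruncatedWittVector.truncate_wittVector_truncate, hV, add_zero]

theorem zero_mem_filLog (r n : ℕ) : (0 : TruncatedWittVector p n L) ∈ D.filLog p r n :=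
  (mem_filLog_iff hp.out.ne_zero).2 fun i c hc => by simp [D.v_zero] at hc

theorem v_coeff_teichmuller_add_sub_nonneg {a b : L} (ha : 0 ≤ D.v a) (hb : 0 ≤ D.v b)
    (i : ℕ) :
    0 ≤ D.v ((teichmuller p (a + b) - teichmuller p a - teichmuller p b).coeff i) := by
  let a' : D.integers := ⟨a, ha⟩
  let b' : D.integers := ⟨b, hb⟩
  have hmap : map D.integers.subtype
      (teichmuller p (a' + b') - teichmuller p a' - teichmuller p b') =
      teichmuller p (a + b) - teichmuller p a - teichmuller p b := by
    simp only [map_sub, map_teichmuller]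
    rfl
  rw [← hmap, map_coeff]
  exact ((teichmuller p (a' + b') - teichmuller p a' - teichmuller p b').coeff i).2

variable {n s : ℕ}

theorem twMap_eq (h : padicValNat p s < n) (x : L) :
    D.twMap p n s x = truncate n (verschiebung^[n - 1 - padicValNat p s]
      (teichmuller p (x * (D.z ^ (s / p ^ padicValNat p s))⁻¹))) := by
  rw [twMap, min_eq_left h.le, wT_eq_truncate, wVit_truncate h, Nat.sub_succ, Nat.sub_right_comm,
    Nat.pred_eq_sub_one]

theorem twMap_coeff (h : padicValNat p s < n) (x : L) (i : Fin n) :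
    (D.twMap p n s x).coeff i =
      if (i : ℕ) = n - 1 - padicValNat p s then x * (D.z ^ (s / p ^ padicValNat p s))⁻¹
      else 0 := by
  rw [twMap_eq h, coeff_truncate, iterate_verschiebung_teichmuller_coeff]

theorem twMap_mem_filLog_iff (h : padicValNat p s < n) (r : ℕ) (x : L) :
    D.twMap p n s x ∈ D.filLog p r n ↔
      ∀ c : ℤ, D.v x = c → (s : ℤ) - r ≤ p ^ padicValNat p s * c := by
  have hs₀ := pow_padicValNat_mul_div p s
  have hexp : n - 1 - (n - 1 - padicValNat p s) = padicValNat p s := by omega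
  rw [mem_filLog_iff hp.out.ne_zero]
  constructor
  · intro H c hc
    have := H ⟨n - 1 - padicValNat p s, by omega⟩ (c - (s / p ^ padicValNat p s : ℕ))
    rw [twMap_coeff h, if_pos rfl, v_mul_inv_z_pow_eq_iff, sub_add_cancel, hexp] at this
    linarith [this hc]
  · intro H i c hc
    rw [twMap_coeff h] at hc
    split_ifs at hc with hi
    · rw [hi, hexp]
      linarith [H _ (v_mul_inv_z_pow_eq_iff.1 hc)]
    · simp [D.v_zero] at hc

theorem twMap_mem_filLog_iff_nonneg (h : padicValNat p s < n) {x : L} :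
    D.twMap p n s x ∈ D.filLog p s n ↔ 0 ≤ D.v x := by
  have hpos : (0 : ℤ) < (p : ℤ) ^ padicValNat p s := by have := hp.out.pos; positivity
  rw [twMap_mem_filLog_iff h, sub_self]
  cases D.v x with
  | top => simp
  | coe c => simp [mul_nonneg_iff_of_pos_left hpos]

theorem twMap_mem_filLog_pred_iff (hs : s ≠ 0) (h : padicValNat p s < n) {x : L} :
    D.twMap p n s x ∈ D.filLog p (s - 1) n ↔ 1 ≤ D.v x := by
  have hpos : (0 : ℤ) < (p : ℤ) ^ padicValNat p s := by have := hp.out.pos; positivity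
  rw [twMap_mem_filLog_iff h, show (s : ℤ) - (s - 1 : ℕ) = 1 by omega]
  cases D.v x with
  | top => simp
  | coe c =>
    simp only [WithTop.coe_inj, forall_eq', WithTop.one_le_coe]
    constructor <;> intro <;> nlinarith

theorem mem_filKM_iff (hs : s ≠ 0) (h : padicValNat p s < n) {w : TruncatedWittVector p n L} :
    w ∈ D.filKM p s n ↔ ∃ a ∈ D.filLog p (s - 1) n, ∃ y : WittVector p L,
      truncate (padicValNat p s) y ∈ D.filLog p s (padicValNat p s) ∧
      w = a + truncate n (verschiebung^[n - padicValNat p s] y) := by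
  simp only [filKM, if_neg hs, Set.mem_ofPred_eq]
  rw [min_eq_left h.le]
  constructor
  · rintro ⟨a, ha, b, hb, rfl⟩
    obtain ⟨y, rfl⟩ := truncate_surjective p _ L b
    exact ⟨a, ha, y, hb, by rw [wVit_truncate h.le]⟩
  · rintro ⟨a, ha, y, hy, rfl⟩
    exact ⟨a, ha, _, hy, by rw [wVit_truncate h.le]⟩

theorem truncate_shift_one_mem_filLog {m e : ℕ} {E : WittVector p L}
    (hE : ∀ i (c : ℤ), D.v (E.coeff i) = c → -((p : ℤ) ^ i * e) ≤ c) :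
    truncate m (E.shift 1) ∈ D.filLog p (p ^ m * e) m := by
  rw [mem_filLog_iff hp.out.ne_zero]
  intro j c hc
  rw [coeff_truncate, shift_coeff] at hc
  have hpow : (p : ℤ) ^ (m - 1 - (j : ℕ)) * p ^ (1 + (j : ℕ)) = p ^ m := by
    rw [← pow_add]
    congr 1
    omega
  calc -((p ^ m * e : ℕ) : ℤ) = p ^ (m - 1 - (j : ℕ)) * -(p ^ (1 + (j : ℕ)) * e) := by
        push_cast
        rw [← hpow]
        ring
    _ ≤ p ^ (m - 1 - (j : ℕ)) * c := mul_le_mul_of_nonneg_left (hE _ c hc) (by positivity)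

theorem twMap_add_sub_mem_filKM (hs : s ≠ 0) (h : padicValNat p s < n) {x y : L}
    (hx : 0 ≤ D.v x) (hy : 0 ≤ D.v y) :
    D.twMap p n s (x + y) - D.twMap p n s x - D.twMap p n s y ∈ D.filKM p s n := by
  set m := padicValNat p s
  set s₀ := s / p ^ m
  set u := (D.z ^ s₀)⁻¹
  set E := teichmuller p ((x + y) * u) - teichmuller p (x * u) - teichmuller p (y * u)
  have hE : E = teichmuller p u * (teichmuller p (x + y) - teichmuller p x - teichmuller p y) := by
    simp only [E, map_mul]
    ring
  have hE0 : E.coeff 0 = 0 := by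
    rw [← constantCoeff_apply]
    simp only [E, map_sub, constantCoeff_apply, teichmuller_coeff_zero]
    ring
  have hEv (i : ℕ) (c : ℤ) (hc : D.v (E.coeff i) = c) : -((p : ℤ) ^ i * s₀) ≤ c := by
    rw [hE, teichmuller_mul_coeff, mul_comm, inv_pow, ← pow_mul, v_mul_inv_z_pow_eq_iff] at hc
    have := v_coeff_teichmuller_add_sub_nonneg (p := p) hx hy i
    rw [hc, WithTop.coe_nonneg] at this
    push_cast at this
    linarith
  have hdiff : D.twMap p n s (x + y) - D.twMap p n s x - D.twMap p n s y =
      truncate n (verschiebung^[n - m] (E.shift 1)) := by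
    rw [twMap_eq h, twMap_eq h, twMap_eq h, ← map_sub, ← map_sub, ← iterate_map_sub,
      ← iterate_map_sub, iterate_verschiebung_shift_one _ hE0,
      show n - 1 - m + 1 = n - m by omega]
  rw [mem_filKM_iff hs h]
  refine ⟨0, zero_mem_filLog _ _, E.shift 1, ?_, by rw [hdiff, zero_add]⟩
  have := truncate_shift_one_mem_filLog (m := m) hEv
  rwa [Nat.mul_div_cancel' pow_padicValNat_dvd] at this

theorem truncate_shift_mem_filLog {r m j : ℕ} {W : WittVector p L} (hjm : j + m = n)
    (hW : truncate n W ∈ D.filLog p r n) : truncate m (W.shift j) ∈ D.filLog p r m := by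
  rw [mem_filLog_iff hp.out.ne_zero] at hW ⊢
  intro i c hc
  rw [coeff_truncate, shift_coeff] at hc
  have := hW ⟨j + i, by omega⟩ c hc
  rwa [show n - 1 - (j + (i : ℕ)) = m - 1 - i by omega] at this

theorem truncate_head_mem_filLog_pred (hs : s ≠ 0) {W : WittVector p L}
    (hW : truncate n W ∈ D.filLog p s n) :
    truncate n (WittVector.mk p fun i => if i < n - 1 - padicValNat p s then W.coeff i else 0) ∈
      D.filLog p (s - 1) n := by
  rw [mem_filLog_iff hp.out.ne_zero] at hW ⊢
  intro i c hc
  rw [coeff_truncate, coeff_mk] at hc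
  split_ifs at hc with hi
  · have hnd : ¬ p ^ (n - 1 - (i : ℕ)) ∣ s := fun hd =>
      pow_succ_padicValNat_not_dvd hs ((pow_dvd_pow p (by omega)).trans hd)
    have := Int.one_sub_le_of_neg_le_of_not_dvd (by exact_mod_cast hW i c hc) hnd
    push_cast at this
    omega
  · simp [D.v_zero] at hc

theorem exists_sub_twMap_mem_filKM (hs : s ≠ 0) (h : padicValNat p s < n)
    {w : TruncatedWittVector p n L} (hw : w ∈ D.filLog p s n) :
    ∃ x : L, 0 ≤ D.v x ∧ w - D.twMap p n s x ∈ D.filKM p s n := by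
  set m := padicValNat p s
  set k := n - 1 - m
  obtain ⟨W, rfl⟩ := truncate_surjective p n L w
  have htw : D.twMap p n s (W.coeff k * D.z ^ (s / p ^ m)) =
      truncate n (verschiebung^[k] (teichmuller p (W.coeff k))) := by
    rw [twMap_eq h, mul_inv_cancel_right₀ (pow_ne_zero _ z_ne_zero)]
  refine ⟨W.coeff k * D.z ^ (s / p ^ m), ?_, ?_⟩
  · refine (twMap_mem_filLog_iff_nonneg h).1 <|
      mem_filLog_of_coeff_eq_zero_or_eq hp.out.ne_zero hw fun i => ?_
    rw [htw, coeff_truncate, coeff_truncate, iterate_verschiebung_teichmuller_coeff]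
    split_ifs with hi
    · exact Or.inr (by rw [hi])
    · exact Or.inl rfl
  · rw [mem_filKM_iff hs h]
    refine ⟨_, truncate_head_mem_filLog_pred hs hw, W.shift (k + 1),
      truncate_shift_mem_filLog (by omega) hw, ?_⟩
    rw [htw, show n - m = k + 1 by omega]
    nth_rewrite 1 [eq_mk_add_teichmuller_add_shift W k]
    rw [map_add, map_add]
    abel

theorem twMap_mem_filKM_iff (hs : s ≠ 0) (h : padicValNat p s < n) {x : L} :
    D.twMap p n s x ∈ D.filKM p s n ↔ 1 ≤ D.v x := by
  rw [← twMap_mem_filLog_pred_iff hs h, mem_filKM_iff hs h]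
  constructor
  · rintro ⟨a, ha, y, -, hxa⟩
    refine mem_filLog_of_coeff_eq_zero_or_eq hp.out.ne_zero ha fun i => ?_
    by_cases hi : (i : ℕ) = n - 1 - padicValNat p s
    · exact Or.inr (by rw [hxa, coeff_add_truncate_iterate_verschiebung _ _ (by omega)])
    · exact Or.inl (by rw [twMap_coeff h, if_neg hi])
  · exact fun hx => ⟨_, hx, 0, zero_mem_filLog _ _, by simp⟩

end DVField

theorem statement12_general (p : ℕ) [Fact p.Prime] (L : Type) [Field L]
    (D : DVField L) (n s : ℕ) (hn : 1 ≤ n) (hs : 1 ≤ s)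
    (hm : min (padicValNat p s) n ≤ n - 1) :
    (∀ x : L, 0 ≤ D.v x → D.twMap p n s x ∈ D.filLog p s n) ∧
    (∀ x y : L, 0 ≤ D.v x → 0 ≤ D.v y →
      D.twMap p n s (x + y) - D.twMap p n s x - D.twMap p n s y ∈ D.filKM p s n) ∧
    (∀ w ∈ D.filLog p s n, ∃ x : L, 0 ≤ D.v x ∧ w - D.twMap p n s x ∈ D.filKM p s n) ∧
    (∀ x : L, 0 ≤ D.v x → (D.twMap p n s x ∈ D.filKM p s n ↔ 1 ≤ D.v x)) := by
  have h : padicValNat p s < n := by omega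
  have hs₀ : s ≠ 0 := by omega
  exact ⟨fun _ => (DVField.twMap_mem_filLog_iff_nonneg h).2,
    fun _ _ hx hy => DVField.twMap_add_sub_mem_filKM hs₀ h hx hy,
    fun _ hw => DVField.exists_sub_twMap_mem_filKM hs₀ h hw,
    fun _ _ => DVField.twMap_mem_filKM_iff hs₀ h⟩

/-- (Graded-piece computation.)  Let `n ≥ 1` and `s ≥ 1` with
`m := min(v_p(s), n) ≤ n-1` and `s₀ := s/p^m`.  The map `O → fil^log_s Wₙ(L)/fil_s Wₙ(L)`,
`x ↦ class of V^{n-m-1}([x·z^{-s₀}])`, is a surjective additive group homomorphism with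
kernel exactly `𝔪`; in particular it induces an isomorphism `κ ≅ fil^log_s/fil_s`. -/
theorem statement12 (p : ℕ) [Fact p.Prime] (L : Type) [Field L] [CharP L p]
    (D : DVField L) (n s : ℕ) (hn : 1 ≤ n) (hs : 1 ≤ s)
    (hm : min (padicValNat p s) n ≤ n - 1) :
    (∀ x : L, 0 ≤ D.v x → D.twMap p n s x ∈ D.filLog p s n) ∧
    (∀ x y : L, 0 ≤ D.v x → 0 ≤ D.v y →
      D.twMap p n s (x + y) - D.twMap p n s x - D.twMap p n s y ∈ D.filKM p s n) ∧
    (∀ w ∈ D.filLog p s n, ∃ x : L, 0 ≤ D.v x ∧ w - D.twMap p n s x ∈ D.filKM p s n) ∧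
    (∀ x : L, 0 ≤ D.v x → (D.twMap p n s x ∈ D.filKM p s n ↔ 1 ≤ D.v x)) :=
  statement12_general p L D n s hn hs hm
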